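/- arXiv:math/0305231 — 3 statements merged into one kernel-verified Lean document; each statement's English description precedes it below -/
import Mathlib

section
/- Let f : [a,b] → ℝ be continuous on [a,b] and differentiable on (a,b), where the interval [a,b] does not contain 0. Then |f((a+b)/2) − (1/(b−a))·∫ₐᵇ f(t) dt| ≤ ((b−a)/(2|a+b|))·‖f − ℓf′‖∞. -/
/-!
Pompeiu's mean value theorem (Cauchy's mean value theorem for `f t / t` and `1 / t`) gives
`|t f(x) - x f(t)| ≤ |t - x| ‖f - ℓf'‖∞` on an interval avoiding `0`. Integrating over `t ∈ [a, b]`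
turns the left side into `|(b² - a²)/2 · f(x) - x ∫ f|` and the right side into
`((x - a)² + (b - x)²)/2 · ‖f - ℓf'‖∞`; at the midpoint `x = (a + b)/2` dividing by
`|x| (b - a)` gives the claim.
-/

open Set intervalIntegral

theorem exists_pompeiu_mean_value {f : ℝ → ℝ} {u v : ℝ} (huv : u < v) (h0 : (0 : ℝ) ∉ Icc u v)
    (hf : ContinuousOn f (Icc u v)) (hd : DifferentiableOn ℝ f (Ioo u v)) :
    ∃ c ∈ Ioo u v, u * f v - v * f u = (u - v) * (f c - c * deriv f c) := by
  have hne : ∀ t ∈ Icc u v, t ≠ 0 := fun t ht h => h0 (h ▸ ht)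
  have hder : ∀ c ∈ Ioo u v, HasDerivAt f (deriv f c) c := fun c hc =>
    ((hd c hc).differentiableAt (isOpen_Ioo.mem_nhds hc)).hasDerivAt
  obtain ⟨c, hc, hcauchy⟩ := exists_ratio_hasDerivAt_eq_ratio_slope
    (fun t => f t / t) (fun c => (deriv f c * c - f c * 1) / c ^ 2) huv
    (hf.div continuousOn_id hne)
    (fun c hc => (hder c hc).div (hasDerivAt_id c) (hne c (Ioo_subset_Icc_self hc)))
    (fun t : ℝ => t⁻¹) (fun c => -(c ^ 2)⁻¹) (continuousOn_id.inv₀ hne)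
    (fun c hc => hasDerivAt_inv (hne c (Ioo_subset_Icc_self hc)))
  refine ⟨c, hc, ?_⟩
  have hc0 := hne c (Ioo_subset_Icc_self hc)
  have hu0 := hne u (left_mem_Icc.2 huv.le)
  have hv0 := hne v (right_mem_Icc.2 huv.le)
  field_simp [hc0, hu0, hv0] at hcauchy
  linear_combination hcauchy

theorem abs_mul_sub_mul_le_abs_sub_mul {f : ℝ → ℝ} {a b M : ℝ} (h0 : (0 : ℝ) ∉ Icc a b)
    (hf : ContinuousOn f (Icc a b)) (hd : DifferentiableOn ℝ f (Ioo a b))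
    (hM : ∀ ξ ∈ Ioo a b, |f ξ - ξ * deriv f ξ| ≤ M) {s t : ℝ} (hs : s ∈ Icc a b)
    (ht : t ∈ Icc a b) : |s * f t - t * f s| ≤ |s - t| * M := by
  have of_lt : ∀ s ∈ Icc a b, ∀ t ∈ Icc a b, s < t → |s * f t - t * f s| ≤ |s - t| * M := by
    intro s hs t ht hst
    have hsub : Icc s t ⊆ Icc a b := Icc_subset_Icc hs.1 ht.2
    obtain ⟨c, hc, hpompeiu⟩ := exists_pompeiu_mean_value hst (fun h => h0 (hsub h))
      (hf.mono hsub) (hd.mono (Ioo_subset_Ioo hs.1 ht.2))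
    rw [hpompeiu, abs_mul]
    exact mul_le_mul_of_nonneg_left (hM c (Ioo_subset_Ioo hs.1 ht.2 hc)) (abs_nonneg _)
  rcases lt_trichotomy s t with hst | rfl | hts
  · exact of_lt s hs t ht hst
  · simp
  · rw [abs_sub_comm, abs_sub_comm s]
    exact of_lt t ht s hs hts

theorem integral_abs_sub_of_mem_Icc {a b x : ℝ} (hx : x ∈ Icc a b) :
    ∫ t in a..b, |t - x| = ((x - a) ^ 2 + (b - x) ^ 2) / 2 := by
  have hcont : Continuous fun t : ℝ => |t - x| := by fun_prop
  have hhalf (c : ℝ) : ∫ t in uIoc x c, |t - x| = (c - x) ^ 2 / 2 := by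
    simpa [one_add_one_eq_two] using integral_pow_abs_sub_uIoc (a := x) (b := c) 1
  rw [← integral_add_adjacent_intervals (hcont.intervalIntegrable a x)
      (hcont.intervalIntegrable x b), integral_of_le hx.1, integral_of_le hx.2,
    ← uIoc_of_ge hx.1, ← uIoc_of_le hx.2, hhalf, hhalf]
  ring

theorem ostrowski_pompeiu {f : ℝ → ℝ} {a b x M : ℝ} (hx : x ∈ Icc a b)
    (h0 : (0 : ℝ) ∉ Icc a b) (hf : ContinuousOn f (Icc a b))
    (hd : DifferentiableOn ℝ f (Ioo a b)) (hM : ∀ ξ ∈ Ioo a b, |f ξ - ξ * deriv f ξ| ≤ M) :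
    |(b ^ 2 - a ^ 2) / 2 * f x - x * ∫ t in a..b, f t| ≤ ((x - a) ^ 2 + (b - x) ^ 2) / 2 * M := by
  have hab : a ≤ b := hx.1.trans hx.2
  have hfi : IntervalIntegrable f MeasureTheory.volume a b := hf.intervalIntegrable_of_Icc hab
  have hgi : IntervalIntegrable (fun t => t * f x - x * f t) MeasureTheory.volume a b :=
    (intervalIntegrable_id.mul_const _).sub (hfi.const_mul _)
  calc |(b ^ 2 - a ^ 2) / 2 * f x - x * ∫ t in a..b, f t|
      = |∫ t in a..b, (t * f x - x * f t)| := by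
        rw [integral_sub (intervalIntegrable_id.mul_const _) (hfi.const_mul _),
          integral_mul_const, integral_const_mul, integral_id]
    _ ≤ ∫ t in a..b, |t * f x - x * f t| := abs_integral_le_integral_abs hab
    _ ≤ ∫ t in a..b, |t - x| * M :=
        integral_mono_on hab hgi.abs
          ((by fun_prop : Continuous fun t : ℝ => |t - x| * M).intervalIntegrable a b)
          fun t ht => abs_mul_sub_mul_le_abs_sub_mul h0 hf hd hM ht hx
    _ = ((x - a) ^ 2 + (b - x) ^ 2) / 2 * M := by
        rw [integral_mul_const, integral_abs_sub_of_mem_Icc hx]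

/-- Corollary 3.2: the midpoint case of the Ostrowski–Pompeiu inequality. -/
theorem ostrowski_pompeiu_midpoint (a b : ℝ) (f : ℝ → ℝ)
    (hab : a < b) (h0 : (0:ℝ) ∉ Set.Icc a b)
    (hf : ContinuousOn f (Set.Icc a b))
    (hd : DifferentiableOn ℝ f (Set.Ioo a b))
    (hbdd : BddAbove ((fun ξ => |f ξ - ξ * deriv f ξ|) '' Set.Ioo a b)) :
    |f ((a + b) / 2) - (1 / (b - a)) * ∫ t in a..b, f t| ≤
      (b - a) / (2 * |a + b|) *
        sSup ((fun ξ => |f ξ - ξ * deriv f ξ|) '' Set.Ioo a b) := by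
  set M := sSup ((fun ξ => |f ξ - ξ * deriv f ξ|) '' Set.Ioo a b)
  have hba : 0 < b - a := sub_pos.2 hab
  have hmid : (a + b) / 2 ∈ Icc a b := ⟨by linarith, by linarith⟩
  have hsum : 0 < |a + b| := abs_pos.2 fun h => h0 (by simpa [h] using hmid)
  have hbound := ostrowski_pompeiu hmid h0 hf hd fun ξ hξ => le_csSup hbdd ⟨ξ, hξ, rfl⟩
  have hfactor : (b ^ 2 - a ^ 2) / 2 * f ((a + b) / 2) - (a + b) / 2 * ∫ t in a..b, f t
      = (b - a) * (a + b) / 2 * (f ((a + b) / 2) - (1 / (b - a)) * ∫ t in a..b, f t) := by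
    field_simp [hba.ne']
    ring
  rw [hfactor, abs_mul, abs_div, abs_mul, abs_of_pos hba, abs_two] at hbound
  rw [show (b - a) / (2 * |a + b|) * M
      = (((a + b) / 2 - a) ^ 2 + (b - (a + b) / 2) ^ 2) / 2 * M / ((b - a) * |a + b| / 2) by
        field_simp [hba.ne']; ring, le_div_iff₀ (by positivity)]
  linarith
end

section
/- Let 0 < a < b, let f : [a,b] → ℝ be continuous on [a,b] and differentiable on (a,b), and let w : [a,b] → ℝ be nonnegative and integrable with ∫ₐᵇ w(t) dt > 0. Set x := (∫ₐᵇ t·w(t) dt)/(∫ₐᵇ w(t) dt), which lies in [a,b]. Then |f(x) − (1/∫ₐᵇ w(t) dt)·∫ₐᵇ f(t)w(t) dt| ≤ ‖f − ℓf′‖∞ · [ (∫ₐˣ w(t) dt − ∫ₓᵇ w(t) dt)/(∫ₐᵇ w(t) dt) + (∫ₓᵇ t·w(t) dt − ∫ₐˣ t·w(t) dt)/(∫ₐᵇ t·w(t) dt) ]. -/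
/-!
Cauchy's mean value theorem for `f t / t` and `1 / t` (Pompeiu's mean value theorem)
gives `|t f(x) - x f(t)| ≤ ‖f - ℓf'‖∞ |t - x|` on `[a, b]`. Integrating against `w`
turns the left side into `|f(x) ∫ t w - x ∫ f w|`, which equals
`∫ t w · |f(x) - ∫ f w / ∫ w|` because `x` is the `w`-mean of `t`; splitting
`∫ |t - x| w` at `x` produces the bracket.
-/

open Set intervalIntegral
open MeasureTheory (volume)

theorem exists_mul_sub_mul_eq_pompeiu {f : ℝ → ℝ} {u v : ℝ} (hu : 0 < u) (huv : u < v)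
    (hf : ContinuousOn f (Icc u v)) (hd : DifferentiableOn ℝ f (Ioo u v)) :
    ∃ ξ ∈ Ioo u v, v * f u - u * f v = (f ξ - ξ * deriv f ξ) * (v - u) := by
  have hne : ∀ t ∈ Icc u v, t ≠ 0 := fun t ht => (hu.trans_le ht.1).ne'
  obtain ⟨ξ, hξ, hcauchy⟩ := exists_ratio_hasDerivAt_eq_ratio_slope
    (fun t => f t / t) (fun t => (deriv f t * t - f t * 1) / t ^ 2) huv
    (hf.div continuousOn_id hne)
    (fun t ht => ((hd t ht).differentiableAt (Ioo_mem_nhds ht.1 ht.2)).hasDerivAt.div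
      (hasDerivAt_id t) (hne t (Ioo_subset_Icc_self ht)))
    (fun t => t⁻¹) (fun t => -(t ^ 2)⁻¹) (continuousOn_inv₀.mono hne)
    (fun t ht => hasDerivAt_inv (hne t (Ioo_subset_Icc_self ht)))
  refine ⟨ξ, hξ, ?_⟩
  have hξ0 : ξ ≠ 0 := hne ξ (Ioo_subset_Icc_self hξ)
  have hu0 : u ≠ 0 := hu.ne'
  have hv0 : v ≠ 0 := (hu.trans huv).ne'
  field_simp at hcauchy
  linear_combination -hcauchy

theorem abs_mul_sub_mul_le_of_pompeiu_bound {f : ℝ → ℝ} {a b K : ℝ} (ha : 0 < a)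
    (hf : ContinuousOn f (Icc a b)) (hd : DifferentiableOn ℝ f (Ioo a b))
    (hK : ∀ ξ ∈ Ioo a b, |f ξ - ξ * deriv f ξ| ≤ K) {u v : ℝ} (hu : u ∈ Icc a b)
    (hv : v ∈ Icc a b) :
    |v * f u - u * f v| ≤ K * |v - u| := by
  wlog huv : u < v generalizing u v
  · rcases (not_lt.1 huv).eq_or_lt with h | h
    · simp [h]
    · rw [abs_sub_comm, abs_sub_comm v]
      exact this hv hu h
  obtain ⟨ξ, hξ, heq⟩ := exists_mul_sub_mul_eq_pompeiu (ha.trans_le hu.1) huv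
    (hf.mono (Icc_subset_Icc hu.1 hv.2)) (hd.mono (Ioo_subset_Ioo hu.1 hv.2))
  rw [heq, abs_mul]
  exact mul_le_mul_of_nonneg_right (hK ξ (Ioo_subset_Ioo hu.1 hv.2 hξ)) (abs_nonneg _)

section Weighted

variable {w : ℝ → ℝ} {a b : ℝ}

theorem div_integral_mul_mem_Icc (hab : a ≤ b) (hw0 : ∀ t ∈ Icc a b, 0 ≤ w t)
    (hwi : IntervalIntegrable w volume a b) (hwpos : 0 < ∫ t in a..b, w t) :
    (∫ t in a..b, t * w t) / (∫ t in a..b, w t) ∈ Icc a b := by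
  have htw : IntervalIntegrable (fun t => t * w t) volume a b :=
    hwi.continuousOn_mul (continuousOn_id' _)
  rw [mem_Icc, le_div_iff₀ hwpos, div_le_iff₀ hwpos, ← integral_const_mul,
    ← integral_const_mul]
  constructor
  · refine integral_mono_on hab (hwi.const_mul a) htw fun t ht => ?_
    exact mul_le_mul_of_nonneg_right ht.1 (hw0 t ht)
  · refine integral_mono_on hab htw (hwi.const_mul b) fun t ht => ?_
    exact mul_le_mul_of_nonneg_right ht.2 (hw0 t ht)

theorem abs_mul_integral_sub_le {f : ℝ → ℝ} {x K : ℝ} (hab : a ≤ b)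
    (hf : ContinuousOn f (Icc a b)) (hw0 : ∀ t ∈ Icc a b, 0 ≤ w t)
    (hwi : IntervalIntegrable w volume a b)
    (hK : ∀ t ∈ Icc a b, |t * f x - x * f t| ≤ K * |t - x|) :
    |f x * (∫ t in a..b, t * w t) - x * ∫ t in a..b, f t * w t|
      ≤ K * ∫ t in a..b, |t - x| * w t := by
  have hf' : ContinuousOn f (uIcc a b) := by rwa [uIcc_of_le hab]
  have htw : IntervalIntegrable (fun t => t * w t) volume a b :=
    hwi.continuousOn_mul (continuousOn_id' _)
  have hfw : IntervalIntegrable (fun t => f t * w t) volume a b := hwi.continuousOn_mul hf'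
  have hdiff : f x * (∫ t in a..b, t * w t) - x * ∫ t in a..b, f t * w t
      = ∫ t in a..b, (t * f x - x * f t) * w t := by
    rw [← integral_const_mul, ← integral_const_mul,
      ← integral_sub (htw.const_mul _) (hfw.const_mul _)]
    congr 1 with t
    ring
  have hgw : IntervalIntegrable (fun t => (t * f x - x * f t) * w t) volume a b :=
    hwi.continuousOn_mul (((continuousOn_id' _).mul continuousOn_const).sub
      (continuousOn_const.mul hf'))
  have hdw : IntervalIntegrable (fun t => |t - x| * w t) volume a b :=
    hwi.continuousOn_mul (continuous_id.sub continuous_const).abs.continuousOn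
  rw [hdiff, ← integral_const_mul]
  refine (abs_integral_le_integral_abs hab).trans <|
    integral_mono_on hab hgw.abs (hdw.const_mul K) fun t ht => ?_
  rw [abs_mul, abs_of_nonneg (hw0 t ht), ← mul_assoc]
  exact mul_le_mul_of_nonneg_right (hK t ht) (hw0 t ht)

theorem integral_abs_sub_mul_eq {x : ℝ} (hax : a ≤ x) (hxb : x ≤ b)
    (hwi : IntervalIntegrable w volume a b) :
    ∫ t in a..b, |t - x| * w t
      = x * ((∫ t in a..x, w t) - ∫ t in x..b, w t)
        + ((∫ t in x..b, t * w t) - ∫ t in a..x, t * w t) := by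
  have hx : x ∈ uIcc a b := mem_uIcc_of_le hax hxb
  have hwl : IntervalIntegrable w volume a x := hwi.mono_set (uIcc_subset_uIcc_left hx)
  have hwr : IntervalIntegrable w volume x b := hwi.mono_set (uIcc_subset_uIcc_right hx)
  have hleft : ∫ t in a..x, |t - x| * w t
      = x * (∫ t in a..x, w t) - ∫ t in a..x, t * w t := by
    rw [integral_congr (g := fun t => x * w t - t * w t), integral_sub (hwl.const_mul x)
      (hwl.continuousOn_mul (continuousOn_id' _)), integral_const_mul]
    intro t ht
    rw [uIcc_of_le hax] at ht
    simp only [abs_of_nonpos (sub_nonpos.2 ht.2)]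
    ring
  have hright : ∫ t in x..b, |t - x| * w t
      = (∫ t in x..b, t * w t) - x * ∫ t in x..b, w t := by
    rw [integral_congr (g := fun t => t * w t - x * w t), integral_sub
      (hwr.continuousOn_mul (continuousOn_id' _)) (hwr.const_mul x), integral_const_mul]
    intro t ht
    rw [uIcc_of_le hxb] at ht
    simp only [abs_of_nonneg (sub_nonneg.2 ht.1)]
    ring
  have hc : Continuous fun t : ℝ => |t - x| := (continuous_id.sub continuous_const).abs
  rw [← integral_add_adjacent_intervals (hwl.continuousOn_mul hc.continuousOn)
    (hwr.continuousOn_mul hc.continuousOn), hleft, hright]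
  ring

end Weighted

/-- Corollary 4.2: the weighted Ostrowski–Pompeiu inequality at the weighted mean point. -/
theorem ostrowski_pompeiu_weighted_mean_point (a b : ℝ) (f w : ℝ → ℝ)
    (ha : 0 < a) (hab : a < b)
    (hf : ContinuousOn f (Set.Icc a b))
    (hd : DifferentiableOn ℝ f (Set.Ioo a b))
    (hw0 : ∀ t ∈ Set.Icc a b, 0 ≤ w t)
    (hwi : IntervalIntegrable w MeasureTheory.volume a b)
    (hwpos : 0 < ∫ t in a..b, w t)
    (hbdd : BddAbove ((fun ξ => |f ξ - ξ * deriv f ξ|) '' Set.Ioo a b))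
    (x : ℝ) (hxdef : x = (∫ t in a..b, t * w t) / ∫ t in a..b, w t) :
    x ∈ Set.Icc a b ∧
      |f x - (1 / ∫ t in a..b, w t) * ∫ t in a..b, f t * w t| ≤
        sSup ((fun ξ => |f ξ - ξ * deriv f ξ|) '' Set.Ioo a b) *
          (((∫ t in a..x, w t) - ∫ t in x..b, w t) / (∫ t in a..b, w t) +
            ((∫ t in x..b, t * w t) - ∫ t in a..x, t * w t) / ∫ t in a..b, t * w t) := by
  have hx : x ∈ Icc a b := hxdef ▸ div_integral_mul_mem_Icc hab.le hw0 hwi hwpos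
  refine ⟨hx, ?_⟩
  set W := ∫ t in a..b, w t
  set M := ∫ t in a..b, t * w t
  set K := sSup ((fun ξ => |f ξ - ξ * deriv f ξ|) '' Ioo a b)
  have hx0 : 0 < x := ha.trans_le hx.1
  have hM : M = x * W := by rw [hxdef]; field_simp
  have hM0 : 0 < M := hM ▸ mul_pos hx0 hwpos
  have hK : ∀ ξ ∈ Ioo a b, |f ξ - ξ * deriv f ξ| ≤ K := fun ξ hξ =>
    le_csSup hbdd ⟨ξ, hξ, rfl⟩
  have key := abs_mul_integral_sub_le hab.le hf hw0 hwi fun t ht =>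
    abs_mul_sub_mul_le_of_pompeiu_bound ha hf hd hK hx ht
  rw [integral_abs_sub_mul_eq hx.1 hx.2 hwi] at key
  have hlhs : f x - 1 / W * ∫ t in a..b, f t * w t
      = (f x * M - x * ∫ t in a..b, f t * w t) / M := by
    rw [hM]; field_simp [hx0.ne']
  have hrhs : K * (((∫ t in a..x, w t) - ∫ t in x..b, w t) / W
        + ((∫ t in x..b, t * w t) - ∫ t in a..x, t * w t) / M)
      = K * (x * ((∫ t in a..x, w t) - ∫ t in x..b, w t)
        + ((∫ t in x..b, t * w t) - ∫ t in a..x, t * w t)) / M := by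
    rw [hM]; field_simp [hx0.ne']
  rw [hlhs, hrhs, abs_div, abs_of_pos hM0]
  exact div_le_div_of_nonneg_right key hM0.le
end

section
/- Let f : [a,b] → ℝ be continuous on [a,b] and differentiable on (a,b). Let p ∈ (0,∞) and suppose that for a given x ∈ (a,b), M_p(x) := sup over u ∈ (a,b) of |x − u|^{1−p}·|f′(u)| is finite. Then |f(x) − (1/(b−a))·∫ₐᵇ f(t) dt| ≤ (1/(p(p+1)(b−a)))·[(x−a)^{p+1} + (b−x)^{p+1}]·M_p(x). -/
/-!
Where `u ≠ x`, the definition of `M = M_p(x)` gives `|f'(u)| ≤ M |x - u|^(p-1)`, the rate at which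
`M |x - u|^p / p` grows as `u` moves away from `x`; comparing `f` with this boundary function by
monotonicity gives `|f x - f t| ≤ M |x - t|^p / p` for all `t ∈ [a, b]`. Averaging over
`[a, b]` and using `∫ₐᵇ |x - t|^p dt = ((x - a)^(p+1) + (b - x)^(p+1)) / (p + 1)` gives the bound.
-/

open Set MeasureTheory intervalIntegral

section
variable {g φ φ' : ℝ → ℝ} {c d : ℝ}

lemma image_sub_le_of_deriv_le (hcd : c ≤ d) (hg : ContinuousOn g (Icc c d))
    (hg' : DifferentiableOn ℝ g (Ioo c d)) (hφ : ContinuousOn φ (Icc c d))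
    (hφ' : ∀ s ∈ Ioo c d, HasDerivAt φ (φ' s) s) (hle : ∀ s ∈ Ioo c d, deriv g s ≤ φ' s) :
    g d - g c ≤ φ d - φ c := by
  have hmono : MonotoneOn (fun s => φ s - g s) (Icc c d) := by
    refine monotoneOn_of_hasDerivWithinAt_nonneg (convex_Icc c d) (hφ.sub hg)
      (f' := fun s => φ' s - deriv g s) (fun s hs => ?_) (fun s hs => ?_)
    · rw [interior_Icc] at hs
      exact ((hφ' s hs).sub (hg'.differentiableAt (Ioo_mem_nhds hs.1 hs.2)).hasDerivAt)
        |>.hasDerivWithinAt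
    · rw [interior_Icc] at hs
      exact sub_nonneg.2 (hle s hs)
  have := hmono (left_mem_Icc.2 hcd) (right_mem_Icc.2 hcd) hcd
  dsimp only at this
  linarith

lemma abs_image_sub_le_of_abs_deriv_le (hcd : c ≤ d) (hg : ContinuousOn g (Icc c d))
    (hg' : DifferentiableOn ℝ g (Ioo c d)) (hφ : ContinuousOn φ (Icc c d))
    (hφ' : ∀ s ∈ Ioo c d, HasDerivAt φ (φ' s) s) (hle : ∀ s ∈ Ioo c d, |deriv g s| ≤ φ' s) :
    |g d - g c| ≤ φ d - φ c := by
  have hup := image_sub_le_of_deriv_le hcd hg hg' hφ hφ' fun s hs =>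
    (le_abs_self _).trans (hle s hs)
  have hdown := image_sub_le_of_deriv_le (g := -g) hcd hg.neg hg'.neg hφ hφ' fun s hs => by
    rw [deriv.neg']
    exact (neg_le_abs _).trans (hle s hs)
  simp only [Pi.neg_apply] at hdown
  exact abs_le.2 ⟨by linarith, hup⟩

end

lemma le_mul_rpow_of_rpow_mul_le {r y p M : ℝ} (hr : 0 < r) (h : r ^ (1 - p) * y ≤ M) :
    y ≤ M * r ^ (p - 1) := by
  calc y = r ^ (1 - p) * y * r ^ (p - 1) := by
        rw [mul_right_comm, ← Real.rpow_add hr, sub_add_sub_cancel', sub_self, Real.rpow_zero,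
          one_mul]
    _ ≤ M * r ^ (p - 1) := by gcongr

lemma abs_sub_le_mul_rpow_div {g : ℝ → ℝ} {x t p M : ℝ} (hp : 0 < p)
    (hg : ContinuousOn g (uIcc x t)) (hg' : DifferentiableOn ℝ g (uIoo x t))
    (hle : ∀ s ∈ uIoo x t, |deriv g s| ≤ M * |x - s| ^ (p - 1)) :
    |g x - g t| ≤ M * |x - t| ^ p / p := by
  rcases le_total t x with htx | hxt
  · rw [uIcc_comm, uIcc_of_le htx] at hg
    rw [uIoo_comm, uIoo_of_le htx] at hg' hle
    have hφ' : ∀ s ∈ Ioo t x, HasDerivAt (fun s => -(M / p) * (x - s) ^ p)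
        (M * |x - s| ^ (p - 1)) s := by
      intro s hs
      have hxs : 0 < x - s := sub_pos.2 hs.2
      refine (((hasDerivAt_id' s).const_sub x).rpow_const (Or.inl hxs.ne')).const_mul (-(M / p))
        |>.congr_deriv ?_
      rw [abs_of_pos hxs]
      field_simp
    have := abs_image_sub_le_of_abs_deriv_le htx hg hg'
      (continuous_const.mul ((continuous_const.sub continuous_id).rpow_const
        fun _ => Or.inr hp.le)).continuousOn hφ' hle
    rw [abs_of_nonneg (sub_nonneg.2 htx)]
    simpa [Real.zero_rpow hp.ne', mul_div_right_comm] using this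
  · rw [uIcc_of_le hxt] at hg
    rw [uIoo_of_le hxt] at hg' hle
    have hφ' : ∀ s ∈ Ioo x t, HasDerivAt (fun s => M / p * (s - x) ^ p)
        (M * |x - s| ^ (p - 1)) s := by
      intro s hs
      have hsx : 0 < s - x := sub_pos.2 hs.1
      refine (((hasDerivAt_id' s).sub_const x).rpow_const (Or.inl hsx.ne')).const_mul (M / p)
        |>.congr_deriv ?_
      rw [abs_sub_comm, abs_of_pos hsx]
      field_simp
    have := abs_image_sub_le_of_abs_deriv_le hxt hg hg'
      (continuous_const.mul ((continuous_id.sub continuous_const).rpow_const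
        fun _ => Or.inr hp.le)).continuousOn hφ' hle
    rw [abs_sub_comm, abs_sub_comm x, abs_of_nonneg (sub_nonneg.2 hxt)]
    simpa [Real.zero_rpow hp.ne', mul_div_right_comm] using this

section
variable {a b x p : ℝ}

lemma intervalIntegrable_abs_sub_rpow_left (hp : -1 < p) (hax : a ≤ x) :
    IntervalIntegrable (fun t => |x - t| ^ p) volume a x := by
  have h := (intervalIntegrable_rpow' (a := x - a) (b := 0) hp).comp_sub_left x
  rw [sub_sub_cancel, sub_zero] at h
  refine (intervalIntegrable_congr fun t ht => ?_).1 h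
  rw [uIoc_of_le hax] at ht
  simp only [abs_of_nonneg (sub_nonneg.2 ht.2)]

lemma intervalIntegrable_abs_sub_rpow_right (hp : -1 < p) (hxb : x ≤ b) :
    IntervalIntegrable (fun t => |x - t| ^ p) volume x b := by
  have h := (intervalIntegrable_rpow' (a := 0) (b := b - x) hp).comp_sub_right x
  rw [zero_add, sub_add_cancel] at h
  refine (intervalIntegrable_congr fun t ht => ?_).1 h
  rw [uIoc_of_le hxb] at ht
  simp only [abs_sub_comm x, abs_of_nonneg (sub_nonneg.2 ht.1.le)]

lemma integral_abs_sub_rpow (hp : -1 < p) (hax : a ≤ x) (hxb : x ≤ b) :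
    ∫ t in a..b, |x - t| ^ p = ((x - a) ^ (p + 1) + (b - x) ^ (p + 1)) / (p + 1) := by
  have hleft : ∫ t in a..x, |x - t| ^ p = ∫ t in a..x, (x - t) ^ p :=
    integral_congr fun t ht => by
      rw [uIcc_of_le hax] at ht
      simp only [abs_of_nonneg (sub_nonneg.2 ht.2)]
  have hright : ∫ t in x..b, |x - t| ^ p = ∫ t in x..b, (t - x) ^ p :=
    integral_congr fun t ht => by
      rw [uIcc_of_le hxb] at ht
      simp only [abs_sub_comm x, abs_of_nonneg (sub_nonneg.2 ht.1)]
  have hp1 : p + 1 ≠ 0 := by linarith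
  rw [← integral_add_adjacent_intervals (intervalIntegrable_abs_sub_rpow_left hp hax)
    (intervalIntegrable_abs_sub_rpow_right hp hxb), hleft, hright,
    integral_comp_sub_left (fun s => s ^ p), integral_comp_sub_right (fun s => s ^ p),
    integral_rpow (Or.inl hp), integral_rpow (Or.inl hp), sub_self, Real.zero_rpow hp1]
  ring

end

lemma abs_sub_average_le {f g : ℝ → ℝ} {a b c : ℝ} (hab : a < b)
    (hf : IntervalIntegrable f volume a b) (hg : IntervalIntegrable g volume a b)
    (hle : ∀ t ∈ Ioc a b, |c - f t| ≤ g t) :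
    |c - (1 / (b - a)) * ∫ t in a..b, f t| ≤ (1 / (b - a)) * ∫ t in a..b, g t := by
  have hba : 0 < b - a := sub_pos.2 hab
  have hmean :
      c - (1 / (b - a)) * ∫ t in a..b, f t = (1 / (b - a)) * ∫ t in a..b, (c - f t) := by
    rw [integral_sub intervalIntegrable_const hf, intervalIntegral.integral_const, smul_eq_mul]
    field_simp
  rw [hmean, abs_mul, abs_of_pos (one_div_pos.2 hba)]
  gcongr
  simpa only [Real.norm_eq_abs] using
    norm_integral_le_of_norm_le (f := fun t => c - f t) hab.le (.of_forall hle) hg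

/-- Theorem 1.4: an Ostrowski type inequality involving
`M_p(x) := sup_{u ∈ (a,b)} |x - u|^{1-p} |f'(u)|`. -/
theorem ostrowski_type_Mp (a b p : ℝ) (f : ℝ → ℝ)
    (hab : a < b) (hp : 0 < p)
    (hf : ContinuousOn f (Set.Icc a b))
    (hd : DifferentiableOn ℝ f (Set.Ioo a b))
    (x : ℝ) (hx : x ∈ Set.Ioo a b)
    (hbdd : BddAbove ((fun u => |x - u| ^ (1 - p) * |deriv f u|) '' Set.Ioo a b)) :
    |f x - (1 / (b - a)) * ∫ t in a..b, f t| ≤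
      1 / (p * (p + 1) * (b - a)) * ((x - a) ^ (p + 1) + (b - x) ^ (p + 1)) *
        sSup ((fun u => |x - u| ^ (1 - p) * |deriv f u|) '' Set.Ioo a b) := by
  set M := sSup ((fun u => |x - u| ^ (1 - p) * |deriv f u|) '' Set.Ioo a b)
  have hxI : x ∈ Icc a b := Ioo_subset_Icc_self hx
  have hderiv : ∀ u ∈ Ioo a b, u ≠ x → |deriv f u| ≤ M * |x - u| ^ (p - 1) := fun u hu hux =>
    le_mul_rpow_of_rpow_mul_le (abs_pos.2 (sub_ne_zero.2 hux.symm))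
      (le_csSup hbdd (mem_image_of_mem _ hu))
  have hpointwise : ∀ t ∈ Icc a b, |f x - f t| ≤ M * |x - t| ^ p / p := fun t ht =>
    abs_sub_le_mul_rpow_div hp (hf.mono (uIcc_subset_Icc hxI ht))
      (hd.mono (uIoo_subset_Ioo hxI ht)) fun s hs =>
        hderiv s (uIoo_subset_Ioo hxI ht hs) (ne_of_mem_of_not_mem hs left_notMem_uIoo)
  have hp' : -1 < p := by linarith
  have hint : IntervalIntegrable (fun t => M * |x - t| ^ p / p) volume a b :=
    (((intervalIntegrable_abs_sub_rpow_left hp' hx.1.le).trans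
      (intervalIntegrable_abs_sub_rpow_right hp' hx.2.le)).const_mul M).div_const p
  calc |f x - (1 / (b - a)) * ∫ t in a..b, f t|
      ≤ 1 / (b - a) * ∫ t in a..b, M * |x - t| ^ p / p :=
        abs_sub_average_le hab (hf.intervalIntegrable_of_Icc hab.le) hint fun t ht =>
          hpointwise t (Ioc_subset_Icc_self ht)
    _ = _ := by
        rw [intervalIntegral.integral_div, intervalIntegral.integral_const_mul,
          integral_abs_sub_rpow hp' hx.1.le hx.2.le]
        field_simp
end
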